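/- Localization of connections: let (L, A) be a Lie-Rinehart algebra, S ⊆ A multiplicative, ∇ an L-connection on the A-module V with curvature R. Then ∇_{X/s}(v/t) := (t∇_X v − X(t)v)/(st²) defines a well-defined S^{-1}L-connection on S^{-1}V, and its curvature satisfies R'(X/r, Y/s)(v/t) = R(X,Y)v / (rst) for all X, Y ∈ L, v ∈ V, r, s, t ∈ S. -/
import Mathlib

/-- Localization of connections: for a Lie-Rinehart algebra `(L,A)`,
a multiplicative set `S ⊆ A`, and an `L`-connection `∇` on `V` with curvature `R`,
the formula `∇_{X/s}(v/t) = (t ∇_X v − X(t) v)/(st²)` defines a well-defined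
`S⁻¹L`-connection on `S⁻¹V` whose curvature satisfies
`R'(X/r, Y/s)(v/t) = R(X,Y)v/(rst)`. -/
theorem stmt_12 {k A L V : Type*} [Field k] [CharZero k] [CommRing A] [Algebra k A]
    [AddCommGroup L] [Module A L] [AddCommGroup V] [Module A V]
    (act : L → A → A) (b : L → L → L)
    -- Lie-Rinehart axioms for (L,A)
    (hact_add : ∀ (X : L) (a c : A), act X (a + c) = act X a + act X c)
    (hact_mul : ∀ (X : L) (a c : A), act X (a * c) = a * act X c + c * act X a)
    (hact_lin : ∀ (a : A) (X : L) (c : A), act (a • X) c = a * act X c)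
    (hact_addX : ∀ (X Y : L) (a : A), act (X + Y) a = act X a + act Y a)
    (hb_skew : ∀ X Y, b X Y = - b Y X)
    (hb_leib : ∀ (X : L) (a : A) (Y : L), b X (a • Y) = act X a • Y + a • b X Y)
    (hb_anchor : ∀ (X Y : L) (a : A), act (b X Y) a = act X (act Y a) - act Y (act X a))
    -- an L-connection on V
    (D : L → V → V)
    (hD_addX : ∀ (X Y : L) (u : V), D (X + Y) u = D X u + D Y u)
    (hD_smulX : ∀ (a : A) (X : L) (u : V), D (a • X) u = a • D X u)
    (hD_addv : ∀ (X : L) (u u' : V), D X (u + u') = D X u + D X u')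
    (hD_leib : ∀ (X : L) (a : A) (u : V), D X (a • u) = act X a • u + a • D X u)
    (S : Submonoid A) :
    ∃ (act' : LocalizedModule S L → Localization S → Localization S)
      (D' : LocalizedModule S L → LocalizedModule S V → LocalizedModule S V),
      -- the localized anchor
      (∀ (X : L) (s : S) (a : A) (t : S),
        act' (LocalizedModule.mk X s) (Localization.mk a t)
          = Localization.mk ((t : A) * act X a - a * act X t) (s * t * t)) ∧
      -- the localized connection is given by the stated formula (hence well defined)
      (∀ (X : L) (s : S) (v : V) (t : S),
        D' (LocalizedModule.mk X s) (LocalizedModule.mk v t)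
          = LocalizedModule.mk ((t : A) • D X v - act X t • v) (s * t * t)) ∧
      -- D' is an S⁻¹L-connection on S⁻¹V
      (∀ x (w w' : LocalizedModule S V), D' x (w + w') = D' x w + D' x w') ∧
      (∀ (a : Localization S) x w, D' (a • x) w = a • D' x w) ∧
      (∀ x y (w : LocalizedModule S V), D' (x + y) w = D' x w + D' y w) ∧
      (∀ x (a : Localization S) w, D' x (a • w) = act' x a • w + a • D' x w) ∧
      -- its curvature localizes the curvature of D
      (∀ (X Y : L) (v : V) (r s t : S),
        D' (LocalizedModule.mk X r) (D' (LocalizedModule.mk Y s) (LocalizedModule.mk v t))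
          - D' (LocalizedModule.mk Y s) (D' (LocalizedModule.mk X r) (LocalizedModule.mk v t))
          - D' (LocalizedModule.mk
                  ((((r : A) * s) • b X Y - ((r : A) * act X s) • Y + ((s : A) * act Y r) • X))
                  (r * r * s * s))
              (LocalizedModule.mk v t)
        = LocalizedModule.mk (D X (D Y v) - D Y (D X v) - D (b X Y) v) (r * s * t)) := by
  classical
  -- derived basic facts
  have hact0 : ∀ X : L, act X (0 : A) = 0 := by
    intro X
    have h := hact_add X 0 0
    rw [add_zero] at h
    exact left_eq_add.mp h
  have hact_neg : ∀ (X : L) (a : A), act X (-a) = -act X a := by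
    intro X a
    have h := hact_add X a (-a)
    rw [add_neg_cancel, hact0] at h
    exact (eq_neg_of_add_eq_zero_right h.symm)
  have hact_sub : ∀ (X : L) (a c : A), act X (a - c) = act X a - act X c := by
    intro X a c
    rw [sub_eq_add_neg, hact_add, hact_neg, ← sub_eq_add_neg]
  have hD0 : ∀ X : L, D X (0 : V) = 0 := by
    intro X
    have h := hD_addv X 0 0
    rw [add_zero] at h
    exact left_eq_add.mp h
  have hD_neg : ∀ (X : L) (u : V), D X (-u) = -D X u := by
    intro X u
    have h := hD_addv X u (-u)
    rw [add_neg_cancel, hD0] at h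
    exact (eq_neg_of_add_eq_zero_right h.symm)
  have hD_sub : ∀ (X : L) (u u' : V), D X (u - u') = D X u - D X u' := by
    intro X u u'
    rw [sub_eq_add_neg, hD_addv, hD_neg, ← sub_eq_add_neg]
  have hD_subX : ∀ (X Y : L) (u : V), D (X - Y) u = D X u - D Y u := by
    intro X Y u
    rw [sub_eq_add_neg, hD_addX, show (-Y : L) = (-1 : A) • Y from (neg_one_smul A Y).symm,
      hD_smulX, neg_one_smul, ← sub_eq_add_neg]
  have hact_subX : ∀ (X Y : L) (a : A), act (X - Y) a = act X a - act Y a := by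
    intro X Y a
    rw [sub_eq_add_neg, hact_addX, show (-Y : L) = (-1 : A) • Y from (neg_one_smul A Y).symm,
      hact_lin, neg_one_mul, ← sub_eq_add_neg]
  -- well-definedness of D' in the module variable
  have wdv : ∀ (X : L) (s : S) (q q' : V × S), LocalizedModule.r S V q q' →
      LocalizedModule.mk ((q.2 : A) • D X q.1 - act X (q.2 : A) • q.1) (s * q.2 * q.2)
        = LocalizedModule.mk ((q'.2 : A) • D X q'.1 - act X (q'.2 : A) • q'.1)
            (s * q'.2 * q'.2) := by
    rintro X s ⟨v, t⟩ ⟨v', t'⟩ ⟨u, hu⟩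
    simp only [Submonoid.smul_def, smul_smul] at hu
    have hE := congrArg (D X) hu
    rw [hD_leib, hD_leib, hact_mul, hact_mul] at hE
    refine LocalizedModule.mk_eq.mpr ⟨u * u, ?_⟩
    simp only [Submonoid.smul_def, Submonoid.coe_mul]
    linear_combination (norm := module) ((u : A) * s * t * t') • hE
      - ((u : A) * s * (t' : A) * act X (t : A) + (u : A) * s * (t : A) * act X (t' : A)
        + (s : A) * t * t' * act X (u : A)) • hu
  -- well-definedness of D' in the Lie-algebra variable
  have wdx : ∀ (p p' : L × S) (v : V) (t : S), LocalizedModule.r S L p p' →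
      LocalizedModule.mk ((t : A) • D p.1 v - act p.1 (t : A) • v) (p.2 * t * t)
        = LocalizedModule.mk ((t : A) • D p'.1 v - act p'.1 (t : A) • v) (p'.2 * t * t) := by
    rintro ⟨X, s⟩ ⟨X', s'⟩ v t ⟨u, hu⟩
    simp only [Submonoid.smul_def, smul_smul] at hu
    have hDe := congrArg (fun Z => D Z v) hu
    simp only [hD_smulX] at hDe
    have hAe := congrArg (fun Z => act Z (t : A)) hu
    simp only [hact_lin] at hAe
    have hAv := congrArg (fun c : A => c • v) hAe
    refine LocalizedModule.mk_eq.mpr ⟨u, ?_⟩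
    simp only [Submonoid.smul_def, Submonoid.coe_mul]
    linear_combination (norm := module) ((t : A) * t * t) • hDe - ((t : A) * t) • hAv
  -- construct D'
  obtain ⟨D', hD'⟩ : ∃ D' : LocalizedModule S L → LocalizedModule S V → LocalizedModule S V,
      ∀ (X : L) (s : S) (v : V) (t : S),
        D' (LocalizedModule.mk X s) (LocalizedModule.mk v t)
          = LocalizedModule.mk ((t : A) • D X v - act X t • v) (s * t * t) := by
    refine ⟨fun x w => LocalizedModule.liftOn x
      (fun p => LocalizedModule.liftOn w
        (fun q => LocalizedModule.mk ((q.2 : A) • D p.1 q.1 - act p.1 (q.2 : A) • q.1)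
          (p.2 * q.2 * q.2))
        (fun q q' h => wdv p.1 p.2 q q' h))
      (fun p p' hp => ?_), fun X s v t => ?_⟩
    · induction w using LocalizedModule.induction_on with
      | h v t =>
        simp only [LocalizedModule.liftOn_mk]
        exact wdx p p' v t hp
    · simp only [LocalizedModule.liftOn_mk]
  -- well-definedness of act' in the ring variable
  have wda : ∀ (X : L) (s : S) (a c : A) (t t' : S), Localization.r S (a, t) (c, t') →
      Localization.mk ((t : A) * act X a - a * act X t) (s * t * t)
        = Localization.mk ((t' : A) * act X c - c * act X t') (s * t' * t') := by
    intro X s a c t t' hr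
    obtain ⟨u, hu⟩ := Localization.r_iff_exists.mp hr
    simp only at hu
    have hE := congrArg (act X) hu
    simp only [hact_mul] at hE
    rw [Localization.mk_eq_mk_iff]
    refine Localization.r_iff_exists.mpr ⟨u * u, ?_⟩
    simp only [Submonoid.coe_mul]
    linear_combination ((u : A) * s * t * t') * hE
      - ((u : A) * s * (t' : A) * act X (t : A) + (u : A) * s * (t : A) * act X (t' : A)
        + (s : A) * t * t' * act X (u : A)) * hu
  -- well-definedness of act' in the Lie-algebra variable
  have wdxa : ∀ (p p' : L × S) (a : A) (t : S), LocalizedModule.r S L p p' →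
      Localization.mk ((t : A) * act p.1 a - a * act p.1 t) (p.2 * t * t)
        = Localization.mk ((t : A) * act p'.1 a - a * act p'.1 t) (p'.2 * t * t) := by
    rintro ⟨X, s⟩ ⟨X', s'⟩ a t ⟨u, hu⟩
    simp only [Submonoid.smul_def, smul_smul] at hu
    have h1 := congrArg (fun Z => act Z a) hu
    have h2 := congrArg (fun Z => act Z (t : A)) hu
    simp only [hact_lin] at h1 h2
    rw [Localization.mk_eq_mk_iff]
    refine Localization.r_iff_exists.mpr ⟨u, ?_⟩
    simp only [Submonoid.coe_mul]
    linear_combination ((t : A) * t * t) * h1 - ((t : A) * t * a) * h2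
  -- construct act'
  obtain ⟨act', hact'⟩ : ∃ act' : LocalizedModule S L → Localization S → Localization S,
      ∀ (X : L) (s : S) (a : A) (t : S),
        act' (LocalizedModule.mk X s) (Localization.mk a t)
          = Localization.mk ((t : A) * act X a - a * act X t) (s * t * t) := by
    refine ⟨fun x a => LocalizedModule.liftOn x
      (fun p => Localization.liftOn a
        (fun n d => Localization.mk ((d : A) * act p.1 n - n * act p.1 d) (p.2 * d * d))
        (fun {n n' d d'} h => wda p.1 p.2 n n' d d' h))
      (fun p p' hp => ?_), fun X s a t => ?_⟩
    · induction a using Localization.induction_on with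
      | H q =>
        simp only [Localization.liftOn_mk]
        exact wdxa p p' q.1 q.2 hp
    · simp only [LocalizedModule.liftOn_mk, Localization.liftOn_mk]
  refine ⟨act', D', hact', hD', ?_, ?_, ?_, ?_, ?_⟩
  -- additivity in the module variable
  · intro x w w'
    induction x using LocalizedModule.induction_on with
    | h X s =>
      induction w, w' using LocalizedModule.induction_on₂ with
      | h v v' t t' =>
        rw [LocalizedModule.mk_add_mk, hD', hD', hD', LocalizedModule.mk_add_mk]
        refine LocalizedModule.mk_eq.mpr ⟨1, ?_⟩
        simp only [Submonoid.smul_def, Submonoid.coe_mul, OneMemClass.coe_one, one_smul,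
          hD_addv, hD_leib, hact_mul]
        module
  -- Localization-scalar linearity in the Lie variable
  · intro a x w
    induction a using Localization.induction_on with
    | H p =>
      obtain ⟨c, u⟩ := p
      induction x using LocalizedModule.induction_on with
      | h X s =>
        induction w using LocalizedModule.induction_on with
        | h v t =>
          rw [LocalizedModule.mk_smul_mk, hD', hD', LocalizedModule.mk_smul_mk]
          refine LocalizedModule.mk_eq.mpr ⟨1, ?_⟩
          simp only [Submonoid.smul_def, Submonoid.coe_mul, OneMemClass.coe_one, one_smul,
            hD_smulX, hact_lin]
          module
  -- additivity in the Lie variable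
  · intro x y w
    induction x, y using LocalizedModule.induction_on₂ with
    | h X Y s s' =>
      induction w using LocalizedModule.induction_on with
      | h v t =>
        rw [LocalizedModule.mk_add_mk, hD', hD', hD', LocalizedModule.mk_add_mk]
        refine LocalizedModule.mk_eq.mpr ⟨1, ?_⟩
        simp only [Submonoid.smul_def, Submonoid.coe_mul, OneMemClass.coe_one, one_smul,
          hD_addX, hD_smulX, hact_addX, hact_lin]
        module
  -- Leibniz rule
  · intro x a w
    induction a using Localization.induction_on with
    | H p =>
      obtain ⟨c, u⟩ := p
      induction x using LocalizedModule.induction_on with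
      | h X s =>
        induction w using LocalizedModule.induction_on with
        | h v t =>
          rw [LocalizedModule.mk_smul_mk, hD', hD', hact', LocalizedModule.mk_smul_mk,
            LocalizedModule.mk_smul_mk, LocalizedModule.mk_add_mk]
          refine LocalizedModule.mk_eq.mpr ⟨1, ?_⟩
          simp only [Submonoid.smul_def, Submonoid.coe_mul, OneMemClass.coe_one, one_smul,
            hD_leib, hact_mul]
          module
  -- curvature localizes
  · intro X Y v r s t
    rw [hD', hD', hD', hD', hD']
    rw [sub_eq_add_neg, sub_eq_add_neg, ← LocalizedModule.mk_neg, ← LocalizedModule.mk_neg,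
      LocalizedModule.mk_add_mk, LocalizedModule.mk_add_mk]
    refine LocalizedModule.mk_eq.mpr ⟨1, ?_⟩
    simp only [Submonoid.smul_def, Submonoid.coe_mul, OneMemClass.coe_one, one_smul,
      hD_sub, hD_addv, hD_leib, hD_addX, hD_subX, hD_smulX,
      hact_sub, hact_mul, hact_addX, hact_subX, hact_lin, hb_anchor]
    module
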